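/- arXiv:math/0610185 — 2 statements merged into one kernel-verified Lean document; each statement's English description precedes it below -/
import Mathlib

section
/- For all x, y ∈ [n], the involutions φ_x and φ_y on S_n commute: φ_x(φ_y(π)) = φ_y(φ_x(π)) for all π ∈ S_n. -/
namespace FS

/-- The word `a_0, a_1, ..., a_n, a_{n+1}` of the permutation (as a list `l` of length `n`),
with the boundary convention `a_0 = a_{n+1} = n+1`. -/
def wordext (n : ℕ) (l : List ℕ) : ℕ → ℕ := fun i => ((n + 1) :: (l ++ [n + 1])).getD i 0

/-- Number of descents of the word `l`. -/
def desL (l : List ℕ) : ℕ := (l.zip l.tail).countP (fun p => decide (p.2 < p.1))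

/-- Number of peaks (boundary convention `a_0 = a_{n+1} = n+1`). -/
def peakL (n : ℕ) (l : List ℕ) : ℕ :=
  ((Finset.Icc 1 n).filter (fun k =>
    wordext n l (k - 1) < wordext n l k ∧ wordext n l (k + 1) < wordext n l k)).card

def valleyL (n : ℕ) (l : List ℕ) : ℕ :=
  ((Finset.Icc 1 n).filter (fun k =>
    wordext n l k < wordext n l (k - 1) ∧ wordext n l k < wordext n l (k + 1))).card

/-- Number of double ascents. -/
def daL (n : ℕ) (l : List ℕ) : ℕ :=
  ((Finset.Icc 1 n).filter (fun k =>
    wordext n l (k - 1) < wordext n l k ∧ wordext n l k < wordext n l (k + 1))).card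

/-- Number of double descents. -/
def ddL (n : ℕ) (l : List ℕ) : ℕ :=
  ((Finset.Icc 1 n).filter (fun k =>
    wordext n l k < wordext n l (k - 1) ∧ wordext n l (k + 1) < wordext n l k)).card

/-- All permutations of `[n] = {1, ..., n}` as lists. -/
def perms (n : ℕ) : List (List ℕ) := (List.range' 1 n).permutations

/-- The Foata–Strehl involution `φ_x`: writing `l = w₁ w₂ x w₄ w₅` where `w₂` (resp. `w₄`)
is the maximal contiguous subword immediately to the left (resp. right) of `x` all of whose
letters are smaller than `x`, we set `φ_x(l) = w₁ w₄ x w₂ w₅`. -/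
def phi (x : ℕ) (l : List ℕ) : List ℕ :=
  if x ∈ l then
    let L := l.takeWhile (fun y => y != x)
    let R := (l.dropWhile (fun y => y != x)).tail
    let w1 := (L.reverse.dropWhile (fun y => decide (y < x))).reverse
    let w2 := (L.reverse.takeWhile (fun y => decide (y < x))).reverse
    let w4 := R.takeWhile (fun y => decide (y < x))
    let w5 := R.dropWhile (fun y => decide (y < x))
    w1 ++ w4 ++ x :: (w2 ++ w5)
  else l

/-- The (1-indexed) position of the letter `x` in `l`. -/
def posIdx (l : List ℕ) (x : ℕ) : ℕ := l.idxOf x + 1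

/-- `x` is a double ascent of `l` (boundary convention `a_0 = a_{n+1} = n+1`). -/
def isDA (n : ℕ) (l : List ℕ) (x : ℕ) : Bool :=
  l.contains x && decide (wordext n l (posIdx l x - 1) < x)
    && decide (x < wordext n l (posIdx l x + 1))

/-- `x` is a double descent of `l` (boundary convention `a_0 = a_{n+1} = n+1`). -/
def isDD (n : ℕ) (l : List ℕ) (x : ℕ) : Bool :=
  l.contains x && decide (x < wordext n l (posIdx l x - 1))
    && decide (wordext n l (posIdx l x + 1) < x)

/-- The modified Foata–Strehl involution `φ'_x`. -/
def phi' (n x : ℕ) (l : List ℕ) : List ℕ :=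
  if isDA n l x || isDD n l x then phi x l else l

end FS

/-!
Let `x < y` be letters of a word without repetitions. If some letter larger than both lies
between them, it is a wall that neither block crosses, so `φ_x` and `φ_y` act on the two sides
independently. Otherwise `x` lies in one of the two blocks `w₂`, `w₄` that `φ_y` exchanges. The
walls of that block are `≥ y > x`, so `φ_x` only rearranges letters inside it, and `φ_y` moves the
block as a whole; the rearranged block still consists of letters `< y`.
-/

namespace List

variable {α : Type*} {p : α → Bool} {l₁ l₂ : List α}

theorem takeWhile_append_of_forall_of_head?
    (h₁ : ∀ a ∈ l₁, p a) (h₂ : ∀ a ∈ l₂.head?, ¬ p a) : (l₁ ++ l₂).takeWhile p = l₁ := by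
  rw [takeWhile_append_of_pos h₁]
  cases l₂ <;> simp_all

theorem dropWhile_append_of_forall_of_head?
    (h₁ : ∀ a ∈ l₁, p a) (h₂ : ∀ a ∈ l₂.head?, ¬ p a) : (l₁ ++ l₂).dropWhile p = l₂ := by
  rw [dropWhile_append_of_pos h₁]
  cases l₂ <;> simp_all

end List

namespace FS

/-- The factorisation `w₁ w₂ x w₄ w₅` in the definition of `φ_x`; the last two fields express
the maximality of `w₂` and `w₄`. -/
structure IsPhiSplit (x : ℕ) (w₁ w₂ w₄ w₅ : List ℕ) : Prop where
  not_mem : x ∉ w₁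
  lt_of_mem_left : ∀ z ∈ w₂, z < x
  lt_of_mem_right : ∀ z ∈ w₄, z < x
  le_getLast : ∀ z ∈ w₁.getLast?, x ≤ z
  le_head : ∀ z ∈ w₅.head?, x ≤ z

section

variable {x y w : ℕ} {l l₁ l₂ l₃ w₁ w₂ w₄ w₅ : List ℕ}

theorem IsPhiSplit.swap (h : IsPhiSplit x w₁ w₂ w₄ w₅) : IsPhiSplit x w₁ w₄ w₂ w₅ :=
  { h with lt_of_mem_left := h.lt_of_mem_right, lt_of_mem_right := h.lt_of_mem_left }

theorem IsPhiSplit.phi_eq (h : IsPhiSplit x w₁ w₂ w₄ w₅) :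
    phi x (w₁ ++ w₂ ++ x :: (w₄ ++ w₅)) = w₁ ++ w₄ ++ x :: (w₂ ++ w₅) := by
  have hne : ∀ z ∈ w₁ ++ w₂, (z != x) = true := by
    simp only [List.mem_append, bne_iff_ne]
    rintro z (hz | hz)
    · exact ne_of_mem_of_not_mem hz h.not_mem
    · exact (h.lt_of_mem_left z hz).ne
  have hlt₂ : ∀ z ∈ w₂.reverse, decide (z < x) := by simpa using h.lt_of_mem_left
  have hlt₄ : ∀ z ∈ w₄, decide (z < x) := by simpa using h.lt_of_mem_right
  have hge₁ : ∀ z ∈ w₁.reverse.head?, ¬ decide (z < x) := by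
    simpa [List.head?_reverse] using h.le_getLast
  have hge₅ : ∀ z ∈ w₅.head?, ¬ decide (z < x) := by simpa using h.le_head
  have htake : (w₁ ++ w₂ ++ x :: (w₄ ++ w₅)).takeWhile (· != x) = w₁ ++ w₂ :=
    List.takeWhile_append_of_forall_of_head? hne (by simp)
  have hdrop : (w₁ ++ w₂ ++ x :: (w₄ ++ w₅)).dropWhile (· != x) = x :: (w₄ ++ w₅) :=
    List.dropWhile_append_of_forall_of_head? hne (by simp)
  rw [phi, if_pos (by simp)]
  simp only [htake, hdrop, List.tail_cons, List.reverse_append,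
    List.takeWhile_append_of_forall_of_head? hlt₂ hge₁,
    List.dropWhile_append_of_forall_of_head? hlt₂ hge₁,
    List.takeWhile_append_of_forall_of_head? hlt₄ hge₅,
    List.dropWhile_append_of_forall_of_head? hlt₄ hge₅, List.reverse_reverse]

theorem exists_isPhiSplit (hx : x ∈ l) :
    ∃ w₁ w₂ w₄ w₅, IsPhiSplit x w₁ w₂ w₄ w₅ ∧ l = w₁ ++ w₂ ++ x :: (w₄ ++ w₅) := by
  obtain ⟨L, R, rfl, hxL⟩ := List.eq_append_cons_of_mem hx
  let q : ℕ → Bool := fun z => decide (z < x)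
  refine ⟨L.rdropWhile q, L.rtakeWhile q, R.takeWhile q, R.dropWhile q, ⟨?_, ?_, ?_, ?_, ?_⟩, ?_⟩
  · exact fun h => hxL ((List.rdropWhile_prefix q L).subset h)
  · simpa [q] using fun z (hz : z ∈ L.rtakeWhile q) => List.mem_rtakeWhile_imp hz
  · simpa [q] using fun z (hz : z ∈ R.takeWhile q) => List.mem_takeWhile_imp hz
  · intro z hz
    obtain ⟨hne, rfl⟩ := List.mem_getLast?_eq_getLast hz
    simpa [q] using List.rdropWhile_last_not q L hne
  · intro z hz
    have := List.head?_dropWhile_not q R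
    rw [Option.mem_def.1 hz] at this
    simpa [q] using this
  · simp [List.rdropWhile_append_rtakeWhile]

theorem phi_of_not_mem (hx : x ∉ l) : phi x l = l := if_neg hx

theorem perm_phi (x : ℕ) (l : List ℕ) : (phi x l).Perm l := by
  by_cases hx : x ∈ l
  · obtain ⟨w₁, w₂, w₄, w₅, h, rfl⟩ := exists_isPhiSplit hx
    rw [h.phi_eq]
    exact List.perm_iff_count.2 fun a => by simp only [List.count_append, List.count_cons]; omega
  · rw [phi_of_not_mem hx]

theorem phi_involutive (x : ℕ) : Function.Involutive (phi x) := by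
  intro l
  by_cases hx : x ∈ l
  · obtain ⟨w₁, w₂, w₄, w₅, h, rfl⟩ := exists_isPhiSplit hx
    rw [h.phi_eq, h.swap.phi_eq]
  · rw [phi_of_not_mem hx, phi_of_not_mem hx]

theorem phi_append_of_mem (hx : x ∈ l₁) (h₂ : ∀ z ∈ l₂.head?, x ≤ z) :
    phi x (l₁ ++ l₂) = phi x l₁ ++ l₂ := by
  obtain ⟨w₁, w₂, w₄, w₅, h, rfl⟩ := exists_isPhiSplit hx
  have h' : IsPhiSplit x w₁ w₂ w₄ (w₅ ++ l₂) :=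
    { h with
      le_head := by
        cases w₅ with
        | nil => simpa using h₂
        | cons a w₅ => simpa using h.le_head }
  rw [h.phi_eq]
  simpa using h'.phi_eq

theorem phi_append_of_not_mem (hx : x ∉ l₁) (h₁ : ∀ z ∈ l₁.getLast?, x ≤ z) :
    phi x (l₁ ++ l₂) = l₁ ++ phi x l₂ := by
  by_cases hx₂ : x ∈ l₂
  · obtain ⟨w₁, w₂, w₄, w₅, h, rfl⟩ := exists_isPhiSplit hx₂
    have h' : IsPhiSplit x (l₁ ++ w₁) w₂ w₄ w₅ :=
      { h with
        not_mem := by simp [hx, h.not_mem]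
        le_getLast := by
          rw [List.getLast?_append]
          cases hw : w₁.getLast? with
          | none => simpa using h₁
          | some a => simpa [hw] using h.le_getLast }
    rw [h.phi_eq]
    simpa using h'.phi_eq
  · rw [phi_of_not_mem hx₂, phi_of_not_mem (by simp [hx, hx₂])]

theorem phi_append_cons_of_mem (hx : x ∈ l₁) (hxw : x ≤ w) :
    phi x (l₁ ++ w :: l₂) = phi x l₁ ++ w :: l₂ :=
  phi_append_of_mem hx (by simpa using hxw)

theorem phi_append_cons_of_not_mem (hx : x ∉ l₁) (hxw : x < w) :
    phi x (l₁ ++ w :: l₂) = l₁ ++ w :: phi x l₂ := by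
  simpa using phi_append_of_not_mem (l₁ := l₁ ++ [w]) (l₂ := l₂) (by simp [hx, hxw.ne])
    (by simpa using hxw.le)

theorem phi_append_append_of_mem (hx₁ : x ∉ l₁) (h₁ : ∀ z ∈ l₁.getLast?, x ≤ z) (hx₂ : x ∈ l₂)
    (h₃ : ∀ z ∈ l₃.head?, x ≤ z) : phi x (l₁ ++ l₂ ++ l₃) = l₁ ++ phi x l₂ ++ l₃ := by
  rw [phi_append_of_mem (List.mem_append_right l₁ hx₂) h₃, phi_append_of_not_mem hx₁ h₁]

theorem phi_comm_of_separated (hx : x ∈ l₁) (hy : y ∉ l₁) (hxw : x < w) (hyw : y < w) :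
    phi x (phi y (l₁ ++ w :: l₂)) = phi y (phi x (l₁ ++ w :: l₂)) := by
  have hy' : y ∉ phi x l₁ := fun h => hy ((perm_phi x l₁).subset h)
  rw [phi_append_cons_of_not_mem hy hyw, phi_append_cons_of_mem hx hxw.le,
    phi_append_cons_of_mem hx hxw.le, phi_append_cons_of_not_mem hy' hyw]

theorem phi_comm_of_mem_left_block (h : IsPhiSplit y w₁ w₂ w₄ w₅) (hxy : x < y) (hx : x ∈ w₂)
    (hx₁ : x ∉ w₁) (hx₄ : x ∉ w₄) :
    phi x (phi y (w₁ ++ w₂ ++ y :: (w₄ ++ w₅))) = phi y (phi x (w₁ ++ w₂ ++ y :: (w₄ ++ w₅))) := by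
  have h₁ : ∀ z ∈ w₁.getLast?, x ≤ z := fun z hz => hxy.le.trans (h.le_getLast z hz)
  have h₅ : ∀ z ∈ w₅.head?, x ≤ z := fun z hz => hxy.le.trans (h.le_head z hz)
  have h' : IsPhiSplit y w₁ (phi x w₂) w₄ w₅ :=
    { h with lt_of_mem_left := fun z hz => h.lt_of_mem_left z ((perm_phi x w₂).subset hz) }
  calc phi x (phi y (w₁ ++ w₂ ++ y :: (w₄ ++ w₅)))
      = phi x (w₁ ++ w₄ ++ [y] ++ w₂ ++ w₅) := by rw [h.phi_eq]; simp
    _ = w₁ ++ w₄ ++ [y] ++ phi x w₂ ++ w₅ :=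
        phi_append_append_of_mem (by simp [hx₁, hx₄, hxy.ne]) (by simpa using hxy.le) hx h₅
    _ = phi y (w₁ ++ phi x w₂ ++ y :: (w₄ ++ w₅)) := by rw [h'.phi_eq]; simp
    _ = phi y (phi x (w₁ ++ w₂ ++ y :: (w₄ ++ w₅))) := by
        rw [phi_append_append_of_mem hx₁ h₁ hx (by simpa using hxy.le)]

theorem phi_comm_of_lt (hxy : x < y) (hx : x ∈ l) (hy : y ∈ l) (hl : l.Nodup) :
    phi x (phi y l) = phi y (phi x l) := by
  obtain ⟨w₁, w₂, w₄, w₅, h, rfl⟩ := exists_isPhiSplit hy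
  simp only [List.mem_append, List.mem_cons] at hx
  rcases hx with (hx₁ | hx₂) | rfl | hx₄ | hx₅
  · obtain ⟨u, w, rfl⟩ : ∃ u w, w₁ = u ++ [w] :=
      (List.eq_nil_or_concat' w₁).resolve_left (by rintro rfl; simp at hx₁)
    have hyw : y < w := (h.le_getLast w (by simp)).lt_of_ne fun e => h.not_mem (by simp [e])
    have hxu : x ∈ u := by simpa [(hxy.trans hyw).ne] using hx₁
    simpa using phi_comm_of_separated (l₂ := w₂ ++ y :: (w₄ ++ w₅)) hxu
      (fun hyu => h.not_mem (by simp [hyu])) (hxy.trans hyw) hyw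
  · exact phi_comm_of_mem_left_block h hxy hx₂ (by grind [List.nodup_append])
      (by grind [List.nodup_append])
  · exact absurd hxy (lt_irrefl x)
  · have hx₁ : x ∉ w₁ := by grind [List.nodup_append]
    have hx₂ : x ∉ w₂ := by grind [List.nodup_append]
    -- `φ_y` moves `x` from `w₄` into the left block of the swapped split.
    calc phi x (phi y (w₁ ++ w₂ ++ y :: (w₄ ++ w₅)))
        = phi y (phi y (phi x (phi y (w₁ ++ w₂ ++ y :: (w₄ ++ w₅))))) := by
          rw [phi_involutive]
      _ = phi y (phi x (w₁ ++ w₂ ++ y :: (w₄ ++ w₅))) := by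
          rw [h.phi_eq, ← phi_comm_of_mem_left_block h.swap hxy hx₄ hx₁ hx₂, h.swap.phi_eq]
  · obtain ⟨w, v, rfl⟩ := List.exists_cons_of_ne_nil (List.ne_nil_of_mem hx₅)
    have hdisj : x ∉ w₁ ++ w₂ ++ y :: w₄ ∧ y ≠ w := by grind [List.nodup_append]
    have hyw : y < w := (h.le_head w (by simp)).lt_of_ne hdisj.2
    simpa using (phi_comm_of_separated (l₂ := v) (show y ∈ w₁ ++ w₂ ++ y :: w₄ by simp)
      hdisj.1 hyw (hxy.trans hyw)).symm

end

/-- the involutions `φ_x` and `φ_y` commute on `S_n`. -/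
theorem phi_commute (n x y : ℕ) (l : List ℕ) (hx : x ∈ Finset.Icc 1 n)
    (hy : y ∈ Finset.Icc 1 n) (hl : l.Perm (List.range' 1 n)) :
    phi x (phi y l) = phi y (phi x l) := by
  have hmem : ∀ z ∈ Finset.Icc 1 n, z ∈ l := fun z hz => by
    rw [hl.mem_iff, List.mem_range'_1]
    simp only [Finset.mem_Icc] at hz
    omega
  have hnd : l.Nodup := hl.nodup_iff.2 List.nodup_range'
  rcases lt_trichotomy x y with hxy | rfl | hyx
  · exact phi_comm_of_lt hxy (hmem x hx) (hmem y hy) hnd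
  · rfl
  · exact (phi_comm_of_lt hyx (hmem y hy) (hmem x hx) hnd).symm

end FS
end

section
/- The map f : S_n → S_n defined by f = φ'_{[n]} (applying the modified Foata–Strehl involution φ'_x for every x ∈ [n]) satisfies des(f(π)) + des(π) = n - 1 for all π ∈ S_n. -/
namespace FS

/-- The map `f = φ'_{[n]}`, applying the modified Foata–Strehl involution `φ'_x` for
every `x ∈ [n]` (the `φ'_x` commute, so the order is irrelevant). -/
def fsAll (n : ℕ) (l : List ℕ) : List ℕ := (List.range' 1 n).foldl (fun w x => phi' n x w) l

/-!
Let `w` be a nonempty run of letters smaller than `x` whose outer neighbours, in the word with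
the boundary letters `n + 1` added, are larger than `x`. In `A ++ w ++ x :: B` the letter `x` is a
double ascent, in `A ++ x :: (w ++ B)` a double descent, and `φ_x` exchanges the two words. Every
other letter keeps its type, because each of its neighbours either stays or is replaced by one on
the same side of it. Hence `f` exchanges double ascents and double descents.

On the other hand, classifying the positions `0, …, n` of the extended word as descents or
ascents, position `0` is a descent and position `n` an ascent, and counting runs gives
`2 des(π) + da(π) + 1 = n + dd(π)`. Adding this identity for `π` and `f(π)` proves the theorem.
-/

open List

theorem getLastD_append {α : Type*} (p q : List α) (d : α) :
    (p ++ q).getLastD d = q.getLastD (p.getLastD d) := by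
  simp [getLast?_append]

theorem headD_append {α : Type*} (p q : List α) (d : α) :
    (p ++ q).headD d = p.headD (q.headD d) := by
  cases p <;> simp

theorem getLastD_mem {α : Type*} {l : List α} (h : l ≠ []) (d : α) : l.getLastD d ∈ l := by
  obtain ⟨c, t, rfl⟩ := exists_cons_of_ne_nil h
  rw [getLastD_cons]; exact getLastD_mem_cons

theorem headD_mem {α : Type*} {l : List α} (h : l ≠ []) (d : α) : l.headD d ∈ l := by
  obtain ⟨c, t, rfl⟩ := exists_cons_of_ne_nil h; simp

theorem lt_getLastD_of_notMem {α : Type*} [LinearOrder α] {x d : α} {l : List α} (hd : x < d)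
    (hle : ∀ z ∈ l.getLast?, x ≤ z) (hx : x ∉ l) : x < l.getLastD d := by
  rw [getLastD_eq_getLast?]
  cases h : l.getLast? with
  | none => exact hd
  | some z => exact (hle z h).lt_of_ne fun e => hx (e ▸ mem_of_getLast? h)

theorem lt_headD_of_notMem {α : Type*} [LinearOrder α] {x d : α} {l : List α} (hd : x < d)
    (hle : ∀ z ∈ l.head?, x ≤ z) (hx : x ∉ l) : x < l.headD d := by
  rw [headD_eq_head?_getD]
  cases h : l.head? with
  | none => exact hd
  | some z => exact (hle z h).lt_of_ne fun e => hx (e ▸ mem_of_head? h)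

theorem notMem_of_nodup_append_cons {α : Type*} {y : α} {P Q : List α}
    (h : (P ++ y :: Q).Nodup) : y ∉ P :=
  fun hy => (nodup_cons.1 (nodup_middle.1 h)).1 (mem_append_left Q hy)

theorem eq_takeWhile_append_cons_of_mem {α : Type*} [BEq α] [LawfulBEq α] {x : α} {l : List α}
    (hx : x ∈ l) :
    l = l.takeWhile (· != x) ++ x :: (l.dropWhile (· != x)).tail := by
  induction l with
  | nil => simp at hx
  | cons a t ih =>
    by_cases hax : a = x
    · subst hax; simp
    · have hxt : x ∈ t := by simpa [Ne.symm hax] using hx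
      simpa [takeWhile_cons, dropWhile_cons, hax] using ih hxt

theorem phi_split {x : ℕ} {l : List ℕ} (hx : x ∈ l) :
    ∃ w₁ w₂ w₄ w₅ : List ℕ, l = w₁ ++ w₂ ++ x :: (w₄ ++ w₅) ∧
      phi x l = w₁ ++ w₄ ++ x :: (w₂ ++ w₅) ∧ x ∉ w₁ ++ w₂ ∧
      (∀ z ∈ w₂, z < x) ∧ (∀ z ∈ w₄, z < x) ∧
      (∀ z ∈ w₁.getLast?, x ≤ z) ∧ (∀ z ∈ w₅.head?, x ≤ z) := by
  set L := l.takeWhile (· != x)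
  set R := (l.dropWhile (· != x)).tail
  have hL :
      (L.reverse.dropWhile (· < x)).reverse ++ (L.reverse.takeWhile (· < x)).reverse = L := by
    rw [← reverse_append, takeWhile_append_dropWhile, reverse_reverse]
  refine ⟨(L.reverse.dropWhile (· < x)).reverse, (L.reverse.takeWhile (· < x)).reverse,
    R.takeWhile (· < x), R.dropWhile (· < x), ?_, by simp only [phi, if_pos hx]; rfl,
    ?_, ?_, ?_, ?_, ?_⟩
  · rw [hL, takeWhile_append_dropWhile]
    exact eq_takeWhile_append_cons_of_mem hx
  · rw [hL]
    intro h
    simpa using mem_takeWhile_imp h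
  · intro z hz
    simpa using mem_takeWhile_imp (mem_reverse.1 hz)
  · intro z hz
    simpa using mem_takeWhile_imp hz
  · intro z hz
    rw [getLast?_reverse] at hz
    have := head?_dropWhile_not (· < x) L.reverse
    rw [Option.mem_def.1 hz] at this
    simpa using this
  · intro z hz
    have := head?_dropWhile_not (· < x) R
    rw [Option.mem_def.1 hz] at this
    simpa using this

theorem phi_perm (x : ℕ) (l : List ℕ) : phi x l ~ l := by
  by_cases hx : x ∈ l
  · obtain ⟨w₁, w₂, w₄, w₅, hl, hphi, -⟩ := phi_split hx
    rw [hphi, hl, perm_iff_count]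
    intro a
    simp only [count_append, count_cons]
    omega
  · simp [phi, hx]

theorem phi'_perm (n x : ℕ) (l : List ℕ) : phi' n x l ~ l := by
  unfold phi'
  split_ifs
  exacts [phi_perm x l, Perm.refl l]

theorem wordext_append_cons_length (n : ℕ) (p q : List ℕ) (y : ℕ) :
    wordext n (p ++ y :: q) p.length = p.getLastD (n + 1) := by
  unfold wordext
  rw [show (n + 1) :: (p ++ y :: q ++ [n + 1]) = ((n + 1) :: p) ++ (y :: q ++ [n + 1]) by simp,
    getD_append _ _ _ _ (by simp), getD_eq_getElem _ _ (by simp), getElem_cons_length rfl,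
    getLast_eq_getLastD]

theorem wordext_append_cons_length_add_two (n : ℕ) (p q : List ℕ) (y : ℕ) :
    wordext n (p ++ y :: q) (p.length + 2) = q.headD (n + 1) := by
  cases q <;> simp [wordext]

def doubleStatus (n : ℕ) (l : List ℕ) (y : ℕ) : Bool × Bool := (isDA n l y, isDD n l y)

theorem doubleStatus_of_notMem {n y : ℕ} {l : List ℕ} (hy : y ∉ l) :
    doubleStatus n l y = (false, false) := by
  simp [doubleStatus, isDA, isDD, hy]

theorem doubleStatus_append_cons (n : ℕ) {y : ℕ} {p : List ℕ} (q : List ℕ) (hy : y ∉ p) :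
    doubleStatus n (p ++ y :: q) y =
      (decide (p.getLastD (n + 1) < y) && decide (y < q.headD (n + 1)),
        decide (y < p.getLastD (n + 1)) && decide (q.headD (n + 1) < y)) := by
  have hpos : posIdx (p ++ y :: q) y = p.length + 1 := by
    simp [posIdx, idxOf_append_of_notMem hy]
  have hmem : (p ++ y :: q).contains y = true := by simp
  simp only [doubleStatus, isDA, isDD, hpos, hmem, Nat.add_sub_cancel,
    wordext_append_cons_length, wordext_append_cons_length_add_two, Bool.true_and]

theorem doubleStatus_congr {n y : ℕ} {p q p' q' : List ℕ} (hp : y ∉ p) (hp' : y ∉ p')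
    (hl₁ : p.getLastD (n + 1) < y ↔ p'.getLastD (n + 1) < y)
    (hl₂ : y < p.getLastD (n + 1) ↔ y < p'.getLastD (n + 1))
    (hr₁ : y < q.headD (n + 1) ↔ y < q'.headD (n + 1))
    (hr₂ : q.headD (n + 1) < y ↔ q'.headD (n + 1) < y) :
    doubleStatus n (p ++ y :: q) y = doubleStatus n (p' ++ y :: q') y := by
  simp only [doubleStatus_append_cons n _ hp, doubleStatus_append_cons n _ hp', hl₁, hl₂, hr₁,
    hr₂]

section Move

variable {n x : ℕ} {A w B : List ℕ}

theorem doubleStatus_move_self (hw : w ≠ []) (hwx : ∀ z ∈ w, z < x)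
    (hA : x < A.getLastD (n + 1)) (hB : x < B.headD (n + 1)) (hxAw : x ∉ A ++ w) :
    doubleStatus n (A ++ x :: (w ++ B)) x = (doubleStatus n (A ++ w ++ x :: B) x).swap := by
  have hxA : x ∉ A := fun h => hxAw (mem_append_left w h)
  have hhead : (w ++ B).headD (n + 1) < x := by
    rw [headD_append]; exact hwx _ (headD_mem hw _)
  have hlast : (A ++ w).getLastD (n + 1) < x := by
    rw [getLastD_append]; exact hwx _ (getLastD_mem hw _)
  rw [doubleStatus_append_cons n _ hxA, doubleStatus_append_cons n _ hxAw]
  simp only [hA, hB, hhead, hlast, hA.not_gt, hB.not_gt, hhead.not_gt, hlast.not_gt,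
    decide_true, decide_false, Bool.and_self, Prod.swap_prod_mk]

theorem doubleStatus_move_of_mem_left (hw : w ≠ []) (hwx : ∀ z ∈ w, z < x)
    (hA : x < A.getLastD (n + 1)) (hnd : (A ++ w ++ x :: B).Nodup) {y : ℕ} (hy : y ∈ A) :
    doubleStatus n (A ++ x :: (w ++ B)) y = doubleStatus n (A ++ w ++ x :: B) y := by
  obtain ⟨p, t, rfl⟩ := append_of_mem hy
  rw [show p ++ y :: t ++ w ++ x :: B = p ++ y :: (t ++ w ++ x :: B) by simp] at hnd ⊢
  rw [show p ++ y :: t ++ x :: (w ++ B) = p ++ y :: (t ++ x :: (w ++ B)) by simp]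
  have hyp := notMem_of_nodup_append_cons hnd
  rcases t with _ | ⟨d, t⟩
  · rw [getLastD_append, getLastD_cons, getLastD_nil] at hA
    have hwy := hwx _ (headD_mem hw x)
    refine doubleStatus_congr hyp hyp Iff.rfl Iff.rfl ?_ ?_ <;>
      simp only [nil_append, headD_append, headD_cons] <;> omega
  · exact doubleStatus_congr hyp hyp Iff.rfl Iff.rfl Iff.rfl Iff.rfl

theorem doubleStatus_move_of_mem_mid (hwx : ∀ z ∈ w, z < x) (hA : x < A.getLastD (n + 1))
    (hB : x < B.headD (n + 1)) (hnd : (A ++ w ++ x :: B).Nodup) {y : ℕ} (hy : y ∈ w) :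
    doubleStatus n (A ++ x :: (w ++ B)) y = doubleStatus n (A ++ w ++ x :: B) y := by
  have hyx : y < x := hwx y hy
  obtain ⟨p, t, rfl⟩ := append_of_mem hy
  rw [show A ++ (p ++ y :: t) ++ x :: B = A ++ p ++ y :: (t ++ x :: B) by simp] at hnd ⊢
  rw [show A ++ x :: (p ++ y :: t ++ B) = A ++ x :: p ++ y :: (t ++ B) by simp]
  have hyU := notMem_of_nodup_append_cons hnd
  have hyV : y ∉ A ++ x :: p := by simp_all [hyx.ne]
  refine doubleStatus_congr hyV hyU ?_ ?_ ?_ ?_ <;> rcases p with _ | ⟨c, p⟩ <;>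
    rcases t with _ | ⟨d, t⟩ <;>
    simp only [getLastD_append, getLastD_cons, getLastD_nil, headD_cons, nil_append,
      cons_append, append_nil] <;> omega

theorem doubleStatus_move_of_mem_right (hw : w ≠ []) (hwx : ∀ z ∈ w, z < x)
    (hB : x < B.headD (n + 1)) (hnd : (A ++ w ++ x :: B).Nodup) {y : ℕ} (hy : y ∈ B) :
    doubleStatus n (A ++ x :: (w ++ B)) y = doubleStatus n (A ++ w ++ x :: B) y := by
  obtain ⟨p, t, rfl⟩ := append_of_mem hy
  rw [show A ++ w ++ x :: (p ++ y :: t) = A ++ w ++ x :: p ++ y :: t by simp] at hnd ⊢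
  rw [show A ++ x :: (w ++ (p ++ y :: t)) = A ++ x :: (w ++ p) ++ y :: t by simp]
  have hyU := notMem_of_nodup_append_cons hnd
  have hyV : y ∉ A ++ x :: (w ++ p) := fun h =>
    hyU (by simp only [mem_append, mem_cons] at h ⊢; tauto)
  have hwx' := hwx _ (getLastD_mem hw x)
  refine doubleStatus_congr hyV hyU ?_ ?_ Iff.rfl Iff.rfl <;> rcases p with _ | ⟨c, p⟩ <;>
    simp only [getLastD_append, getLastD_cons, getLastD_nil, headD_cons, nil_append,
      cons_append, append_nil] at hB ⊢ <;> omega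

theorem doubleStatus_move (hw : w ≠ []) (hwx : ∀ z ∈ w, z < x) (hA : x < A.getLastD (n + 1))
    (hB : x < B.headD (n + 1)) (hnd : (A ++ w ++ x :: B).Nodup) :
    doubleStatus n (A ++ x :: (w ++ B)) =
      Function.update (doubleStatus n (A ++ w ++ x :: B)) x
        (doubleStatus n (A ++ w ++ x :: B) x).swap := by
  funext y
  rcases eq_or_ne y x with rfl | hyx
  · rw [Function.update_self]
    exact doubleStatus_move_self hw hwx hA hB (notMem_of_nodup_append_cons hnd)
  rw [Function.update_of_ne hyx]
  by_cases hyU : y ∈ A ++ w ++ x :: B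
  · simp only [mem_append, mem_cons] at hyU
    rcases hyU with (hyA | hyw) | rfl | hyB
    · exact doubleStatus_move_of_mem_left hw hwx hA hnd hyA
    · exact doubleStatus_move_of_mem_mid hwx hA hB hnd hyw
    · exact absurd rfl hyx
    · exact doubleStatus_move_of_mem_right hw hwx hB hnd hyB
  · have hyV : y ∉ A ++ x :: (w ++ B) := fun h =>
      hyU (by simp only [mem_append, mem_cons] at h ⊢; tauto)
    rw [doubleStatus_of_notMem hyU, doubleStatus_of_notMem hyV]

theorem doubleStatus_move_back (hw : w ≠ []) (hwx : ∀ z ∈ w, z < x)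
    (hA : x < A.getLastD (n + 1)) (hB : x < B.headD (n + 1))
    (hnd : (A ++ w ++ x :: B).Nodup) :
    doubleStatus n (A ++ w ++ x :: B) =
      Function.update (doubleStatus n (A ++ x :: (w ++ B))) x
        (doubleStatus n (A ++ x :: (w ++ B)) x).swap := by
  rw [doubleStatus_move hw hwx hA hB hnd, Function.update_self, Prod.swap_swap,
    Function.update_idem, Function.update_eq_self]

end Move

theorem doubleStatus_phi' {n x : ℕ} {l : List ℕ} (hx : x < n + 1) (hnd : l.Nodup) :
    doubleStatus n (phi' n x l) =
      Function.update (doubleStatus n l) x (doubleStatus n l x).swap := by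
  by_cases h : isDA n l x || isDD n l x
  swap
  · simp only [Bool.not_eq_true, Bool.or_eq_false_iff] at h
    have hfix : (doubleStatus n l x).swap = doubleStatus n l x := by simp [doubleStatus, h]
    rw [phi', if_neg (by simp [h]), hfix, Function.update_eq_self]
  have hxl : x ∈ l := by
    by_contra hxl
    simp [isDA, isDD, hxl] at h
  have hndφ : (phi x l).Nodup := (phi_perm x l).nodup_iff.2 hnd
  obtain ⟨w₁, w₂, w₄, w₅, hl, hphi, hx₁₂, hw₂, hw₄, hw₁, hw₅⟩ := phi_split hxl
  rw [phi', if_pos h, hphi]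
  rw [hphi] at hndφ
  subst hl
  have hA : x < w₁.getLastD (n + 1) :=
    lt_getLastD_of_notMem hx hw₁ fun h => hx₁₂ (mem_append_left _ h)
  have hB : x < w₅.headD (n + 1) := lt_headD_of_notMem hx hw₅ fun h =>
    (nodup_cons.1 (nodup_middle.1 hnd)).1 (mem_append_right _ (mem_append_right _ h))
  have hstatus : (isDA n _ x, isDD n _ x) = _ := doubleStatus_append_cons n (w₄ ++ w₅) hx₁₂
  rw [Prod.mk.injEq] at hstatus
  rw [hstatus.1, hstatus.2] at h
  -- the four cases: `x` is a valley, a double descent, a double ascent, a peak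
  rcases w₂ with _ | ⟨c, w₂⟩ <;> rcases w₄ with _ | ⟨d, w₄⟩
  · simp only [append_nil, nil_append, hA.not_gt, hB.not_gt, decide_false, Bool.false_and,
      Bool.and_false, Bool.or_self, Bool.false_eq_true] at h
  · simp only [append_nil, nil_append] at hnd hndφ ⊢
    exact doubleStatus_move_back (cons_ne_nil d w₄) hw₄ hA hB hndφ
  · simp only [append_nil, nil_append] at hnd ⊢
    exact doubleStatus_move (cons_ne_nil c w₂) hw₂ hA hB hnd
  · have hc : (w₁ ++ c :: w₂).getLastD (n + 1) < x := by
      rw [getLastD_append]; exact hw₂ _ (getLastD_mem (cons_ne_nil c w₂) _)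
    have hd : d < x := hw₄ d mem_cons_self
    simp only [cons_append, headD_cons, hc.not_gt, hd.not_gt, decide_false, Bool.false_and,
      Bool.and_false, Bool.or_self, Bool.false_eq_true] at h

theorem foldl_phi'_perm (n : ℕ) (xs l : List ℕ) : xs.foldl (fun w x => phi' n x w) l ~ l := by
  induction xs generalizing l with
  | nil => exact Perm.refl l
  | cons x xs ih => exact (ih _).trans (phi'_perm n x l)

theorem doubleStatus_foldl_phi' {n : ℕ} {xs l : List ℕ} (hxs : xs.Nodup)
    (hlt : ∀ x ∈ xs, x < n + 1) (hnd : l.Nodup) (y : ℕ) :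
    doubleStatus n (xs.foldl (fun w x => phi' n x w) l) y =
      if y ∈ xs then (doubleStatus n l y).swap else doubleStatus n l y := by
  induction xs generalizing l with
  | nil => simp
  | cons x xs ih =>
    obtain ⟨hxxs, hxs⟩ := nodup_cons.1 hxs
    have hx := hlt x mem_cons_self
    rw [foldl_cons, ih hxs (fun z hz => hlt z (mem_cons_of_mem x hz))
      ((phi'_perm n x l).nodup_iff.2 hnd), doubleStatus_phi' hx hnd]
    rcases eq_or_ne y x with rfl | hyx
    · simp [hxxs]
    · simp [hyx]

theorem doubleStatus_fsAll {n : ℕ} {l : List ℕ} (hl : l ~ range' 1 n) {y : ℕ} (hy : y ∈ l) :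
    doubleStatus n (fsAll n l) y = (doubleStatus n l y).swap := by
  rw [fsAll, doubleStatus_foldl_phi' nodup_range' (fun x hx => by simp at hx; omega)
    (hl.nodup_iff.2 nodup_range'), if_pos (hl.subset hy)]

theorem fsAll_perm (n : ℕ) (l : List ℕ) : fsAll n l ~ l := foldl_phi'_perm n _ l

theorem desL_cons_cons (a b : ℕ) (t : List ℕ) :
    desL (a :: b :: t) = desL (b :: t) + if b < a then 1 else 0 := by
  simp [desL, countP_cons]

theorem desL_eq_card_range (l : List ℕ) :
    desL l =
      ((Finset.range (l.length - 1)).filter (fun j => l.getD (j + 1) 0 < l.getD j 0)).card := by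
  induction l with
  | nil => rfl
  | cons a t ih =>
    rcases t with _ | ⟨b, t⟩
    · rfl
    · rw [desL_cons_cons, ih, Finset.card_filter, Finset.card_filter]
      simp only [length_cons, Nat.add_sub_cancel]
      rw [Finset.sum_range_succ']
      rfl

theorem card_filter_range_succ (p : ℕ → Prop) [DecidablePred p] (N : ℕ) :
    ((Finset.range N).filter (fun j => p (j + 1))).card = ((Finset.Icc 1 N).filter p).card := by
  rw [Finset.card_filter, Finset.card_filter, Finset.range_eq_Ico,
    Finset.sum_Ico_add' (fun k => if p k then 1 else 0), Finset.Ico_add_one_right_eq_Icc, zero_add]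

theorem wordext_add_one {n j : ℕ} {m : List ℕ} (hj : j < m.length) :
    wordext n m (j + 1) = m.getD j 0 := by
  simp [wordext, getElem?_append_left hj]

theorem wordext_length_add_one (n : ℕ) (m : List ℕ) : wordext n m (m.length + 1) = n + 1 := by
  simp [wordext]

theorem two_mul_card_filter_add_card_filter_not_and_not (p : ℕ → Prop) [DecidablePred p]
    (N : ℕ) :
    2 * ((Finset.Icc 1 N).filter p).card
        + ((Finset.Icc 1 N).filter (fun k => ¬p (k - 1) ∧ ¬p k)).card + (if p N then 0 else 1)
      = N + ((Finset.Icc 1 N).filter (fun k => p (k - 1) ∧ p k)).card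
        + (if p 0 then 0 else 1) := by
  induction N with
  | zero => simp
  | succ N ih =>
    simp only [Finset.card_filter] at ih ⊢
    rw [Finset.sum_Icc_succ_top (by omega), Finset.sum_Icc_succ_top (by omega),
      Finset.sum_Icc_succ_top (by omega), Nat.add_sub_cancel]
    by_cases h₀ : p N <;> by_cases h₁ : p (N + 1) <;>
      simp only [h₀, h₁, not_true_eq_false, not_false_eq_true, and_self, and_true, and_false,
        if_true, if_false] at ih ⊢ <;> omega

section Permutation

variable {n : ℕ} {m : List ℕ}

theorem length_eq_of_perm_range' (hm : m ~ range' 1 n) : m.length = n := by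
  rw [hm.length_eq, length_range']

theorem mem_of_mem_Icc (hm : m ~ range' 1 n) {y : ℕ} (hy : y ∈ Finset.Icc 1 n) : y ∈ m := by
  rw [hm.mem_iff, mem_range'_1]; rw [Finset.mem_Icc] at hy; omega

theorem wordext_last (hm : m ~ range' 1 n) : wordext n m (n + 1) = n + 1 := by
  simpa [length_eq_of_perm_range' hm] using wordext_length_add_one n m

theorem wordext_mem (hm : m ~ range' 1 n) {k : ℕ} (h₁ : 1 ≤ k) (h₂ : k ≤ n) :
    wordext n m k ∈ m := by
  obtain ⟨j, rfl⟩ : ∃ j, k = j + 1 := ⟨k - 1, by omega⟩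
  have hj : j < m.length := by rw [length_eq_of_perm_range' hm]; omega
  rw [wordext_add_one hj, getD_eq_getElem _ _ hj]
  exact getElem_mem hj

theorem wordext_le (hm : m ~ range' 1 n) {k : ℕ} (h₁ : 1 ≤ k) (h₂ : k ≤ n) :
    wordext n m k ≤ n := by
  have := hm.subset (wordext_mem hm h₁ h₂)
  rw [mem_range'_1] at this
  omega

theorem posIdx_wordext (hm : m ~ range' 1 n) {k : ℕ} (h₁ : 1 ≤ k) (h₂ : k ≤ n) :
    posIdx m (wordext n m k) = k := by
  obtain ⟨j, rfl⟩ : ∃ j, k = j + 1 := ⟨k - 1, by omega⟩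
  have hj : j < m.length := by rw [length_eq_of_perm_range' hm]; omega
  rw [wordext_add_one hj, getD_eq_getElem _ _ hj, posIdx,
    (hm.nodup_iff.2 nodup_range').idxOf_getElem]

theorem wordext_posIdx {y : ℕ} (hy : y ∈ m) : wordext n m (posIdx m y) = y := by
  have hidx := idxOf_lt_length_of_mem hy
  rw [posIdx, wordext_add_one hidx, getD_eq_getElem _ _ hidx, getElem_idxOf hidx]

theorem wordext_ne_wordext_add_one (hm : m ~ range' 1 n) {k : ℕ} (hk : k ≤ n) (hn : 0 < n) :
    wordext n m k ≠ wordext n m (k + 1) := by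
  rcases Nat.eq_zero_or_pos k with rfl | hk₀
  · have := wordext_le hm le_rfl (Nat.one_le_iff_ne_zero.2 hn.ne')
    change n + 1 ≠ _
    rw [zero_add]
    omega
  rcases hk.lt_or_eq with hk' | rfl
  · intro h
    have := congrArg (posIdx m) h
    rw [posIdx_wordext hm hk₀ hk, posIdx_wordext hm (by omega) hk'] at this
    omega
  · have := wordext_le hm hk₀ le_rfl
    rw [wordext_last hm]
    omega

theorem card_filter_posIdx (hm : m ~ range' 1 n) (R : ℕ → Prop) [DecidablePred R] :
    ((Finset.Icc 1 n).filter (fun y => R (posIdx m y))).card =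
      ((Finset.Icc 1 n).filter R).card := by
  refine Finset.card_nbij' (posIdx m) (wordext n m) ?_ ?_ ?_ ?_
  · intro y hy
    simp only [Finset.mem_coe, Finset.mem_filter, Finset.mem_Icc] at hy ⊢
    have := idxOf_lt_length_of_mem (mem_of_mem_Icc hm (Finset.mem_Icc.2 hy.1))
    rw [length_eq_of_perm_range' hm] at this
    exact ⟨⟨by simp [posIdx], by simp [posIdx]; omega⟩, hy.2⟩
  · intro k hk
    simp only [Finset.mem_coe, Finset.mem_filter, Finset.mem_Icc] at hk ⊢
    have := hm.subset (wordext_mem hm hk.1.1 hk.1.2)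
    rw [mem_range'_1] at this
    exact ⟨⟨this.1, by omega⟩, by rw [posIdx_wordext hm hk.1.1 hk.1.2]; exact hk.2⟩
  · intro y hy
    exact wordext_posIdx (mem_of_mem_Icc hm (Finset.mem_filter.1 hy).1)
  · intro k hk
    simp only [Finset.mem_coe, Finset.mem_filter, Finset.mem_Icc] at hk
    exact posIdx_wordext hm hk.1.1 hk.1.2

theorem desL_eq_card_filter_Icc (hm : m ~ range' 1 n) :
    desL m = ((Finset.Icc 1 n).filter (fun k => wordext n m (k + 1) < wordext n m k)).card := by
  have hlen := length_eq_of_perm_range' hm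
  rw [desL_eq_card_range, hlen]
  rcases n with _ | N
  · rfl
  have htop : ¬ wordext (N + 1) m (N + 1 + 1) < wordext (N + 1) m (N + 1) := by
    rw [wordext_last hm]
    have := wordext_le hm (by omega : 1 ≤ N + 1) le_rfl
    omega
  have hdrop : ((Finset.Icc 1 (N + 1)).filter
      (fun k => wordext (N + 1) m (k + 1) < wordext (N + 1) m k)).card =
      ((Finset.Icc 1 N).filter
      (fun k => wordext (N + 1) m (k + 1) < wordext (N + 1) m k)).card := by
    rw [Finset.card_filter, Finset.sum_Icc_succ_top (by omega), if_neg htop, add_zero,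
      ← Finset.card_filter]
  rw [hdrop, Nat.add_sub_cancel, ← card_filter_range_succ]
  refine congrArg Finset.card (Finset.filter_congr fun j hj => ?_)
  rw [Finset.mem_range] at hj
  rw [wordext_add_one (by omega), wordext_add_one (by omega)]

theorem daL_eq_card_filter (hm : m ~ range' 1 n) :
    daL n m = ((Finset.Icc 1 n).filter (fun y => (doubleStatus n m y).1)).card := by
  rw [daL, ← card_filter_posIdx hm]
  refine congrArg Finset.card (Finset.filter_congr fun y hy => ?_)
  have hym := mem_of_mem_Icc hm hy
  simp [doubleStatus, isDA, hym, wordext_posIdx hym]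

theorem ddL_eq_card_filter (hm : m ~ range' 1 n) :
    ddL n m = ((Finset.Icc 1 n).filter (fun y => (doubleStatus n m y).2)).card := by
  rw [ddL, ← card_filter_posIdx hm]
  refine congrArg Finset.card (Finset.filter_congr fun y hy => ?_)
  have hym := mem_of_mem_Icc hm hy
  simp [doubleStatus, isDD, hym, wordext_posIdx hym]

theorem two_mul_desL_add_daL (hm : m ~ range' 1 n) (hn : 0 < n) :
    2 * desL m + daL n m + 1 = n + ddL n m := by
  have key := two_mul_card_filter_add_card_filter_not_and_not
    (fun k => wordext n m (k + 1) < wordext n m k) n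
  beta_reduce at key
  have hfirst : wordext n m (0 + 1) < wordext n m 0 := by
    have := wordext_le hm le_rfl hn
    change _ < n + 1
    rw [zero_add]
    omega
  have hlast : ¬ wordext n m (n + 1) < wordext n m n := by
    have := wordext_le hm hn le_rfl
    rw [wordext_last hm]
    omega
  rw [if_pos hfirst, if_neg hlast, ← desL_eq_card_filter_Icc hm] at key
  have hda : daL n m = ((Finset.Icc 1 n).filter (fun k =>
      ¬ wordext n m (k - 1 + 1) < wordext n m (k - 1) ∧
        ¬ wordext n m (k + 1) < wordext n m k)).card := by
    refine congrArg Finset.card (Finset.filter_congr fun k hk => ?_)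
    rw [Finset.mem_Icc] at hk
    have h₁ := wordext_ne_wordext_add_one hm (by omega : k - 1 ≤ n) hn
    have h₂ := wordext_ne_wordext_add_one hm hk.2 hn
    rw [Nat.sub_add_cancel hk.1] at h₁ ⊢
    omega
  have hdd : ddL n m = ((Finset.Icc 1 n).filter (fun k =>
      wordext n m (k - 1 + 1) < wordext n m (k - 1) ∧
        wordext n m (k + 1) < wordext n m k)).card := by
    refine congrArg Finset.card (Finset.filter_congr fun k hk => ?_)
    rw [Nat.sub_add_cancel (Finset.mem_Icc.1 hk).1]
  rw [hda, hdd]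
  omega

end Permutation

section Permutation

variable {n : ℕ} {l : List ℕ}

theorem daL_fsAll (hl : l ~ range' 1 n) : daL n (fsAll n l) = ddL n l := by
  rw [daL_eq_card_filter ((fsAll_perm n l).trans hl), ddL_eq_card_filter hl]
  refine congrArg Finset.card (Finset.filter_congr fun y hy => ?_)
  rw [doubleStatus_fsAll hl (mem_of_mem_Icc hl hy), Prod.fst_swap]

theorem ddL_fsAll (hl : l ~ range' 1 n) : ddL n (fsAll n l) = daL n l := by
  rw [ddL_eq_card_filter ((fsAll_perm n l).trans hl), daL_eq_card_filter hl]
  refine congrArg Finset.card (Finset.filter_congr fun y hy => ?_)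
  rw [doubleStatus_fsAll hl (mem_of_mem_Icc hl hy), Prod.snd_swap]

end Permutation

/-- `des(f(π)) + des(π) = n - 1` where `f = φ'_{[n]}`. -/
theorem des_fsAll (n : ℕ) (l : List ℕ) (hl : l.Perm (List.range' 1 n)) :
    desL (fsAll n l) + desL l = n - 1 := by
  rcases Nat.eq_zero_or_pos n with rfl | hn
  · rw [range'_zero, perm_nil] at hl
    subst hl
    rfl
  have hf := two_mul_desL_add_daL ((fsAll_perm n l).trans hl) hn
  have h := two_mul_desL_add_daL hl hn
  rw [daL_fsAll hl, ddL_fsAll hl] at hf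
  omega

end FS
end
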